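/- arXiv:1801.01542 — 9 statements merged into one kernel-verified Lean document; each statement's English description precedes it below -/
import Mathlib

section
/- For every natural number n ≥ 1, every odd prime q, and every a ≥ 1, with p = q^a, the power sum S_n(p) = ∑_{i=1}^p i^n satisfies: S_n(p) ≡ φ(p) (mod p) if (q-1) divides n, and S_n(p) ≡ 0 (mod p) if (q-1) does not divide n. -/
def S (n m : ℕ) : ℕ := ∑ i ∈ Finset.Icc 1 m, i ^ n

/-!
Split `i < q m` as `i = c m + j` with `c < q`, `j < m`. Modulo `m²` the binomial theorem gives
`∑_{i<qm} iⁿ ≡ q ∑_{j<m} jⁿ + (m ∑_{c<q} c) ∑_{j<m} n jⁿ⁻¹`, and when `q ∣ m` with `q` odd both `m²` and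
`m ∑_{c<q} c = m q (q-1)/2` vanish modulo `q m`. Iterating, `∑_{i<q^a} iⁿ ≡ q^(a-1) ∑_{i<q} iⁿ (mod q^a)`,
and modulo the prime `q` the last sum is the power sum over `𝔽_q`, which is `-1` if `q - 1 ∣ n` and `0`
otherwise. Finally `S n m` differs from `∑_{i<m} iⁿ` by `mⁿ ≡ 0 (mod m)`.
-/

open Finset

lemma add_pow_of_sq_eq_zero {R : Type*} [CommRing R] (x y : R) (hy : y ^ 2 = 0) (n : ℕ) :
    (x + y) ^ n = x ^ n + n * x ^ (n - 1) * y := by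
  simpa [Polynomial.derivative_X_pow] using
    Polynomial.eval_add_of_sq_eq_zero (Polynomial.X ^ n) x y hy

lemma Finset.sum_range_mul_eq_sum_sum {M : Type*} [AddCommMonoid M] (f : ℕ → M) (k m : ℕ) :
    ∑ i ∈ range (k * m), f i = ∑ c ∈ range k, ∑ j ∈ range m, f (c * m + j) := by
  induction k with
  | zero => simp
  | succ k ih => rw [Nat.succ_mul, sum_range_add, ih, sum_range_succ]

lemma Odd.dvd_sum_range_id {q : ℕ} (hq : Odd q) : q ∣ ∑ i ∈ range q, i := by
  obtain ⟨t, rfl⟩ := hq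
  rw [sum_range_id, Nat.add_sub_cancel, mul_left_comm, Nat.mul_div_cancel_left _ two_pos]
  exact dvd_mul_right _ _

lemma sum_range_mul_pow_of_sq_eq_zero {R : Type*} [CommRing R] (n k m : ℕ) (hm : (m : R) ^ 2 = 0)
    (hk : (m : R) * ∑ c ∈ range k, (c : R) = 0) :
    ∑ i ∈ range (k * m), (i : R) ^ n = k * ∑ j ∈ range m, (j : R) ^ n := by
  rw [sum_range_mul_eq_sum_sum]
  calc ∑ c ∈ range k, ∑ j ∈ range m, ((c * m + j : ℕ) : R) ^ n
      = ∑ c ∈ range k, ∑ j ∈ range m, ((j : R) ^ n + n * (j : R) ^ (n - 1) * (c * m)) := by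
        refine sum_congr rfl fun c _ => sum_congr rfl fun j _ => ?_
        rw [Nat.cast_add, Nat.cast_mul, add_comm]
        exact add_pow_of_sq_eq_zero _ _ (by rw [mul_pow, hm, mul_zero]) n
    _ = k * ∑ j ∈ range m, (j : R) ^ n
          + ∑ c ∈ range k, (∑ j ∈ range m, n * (j : R) ^ (n - 1)) * (c * m) := by
        simp only [sum_add_distrib, ← sum_mul, sum_const, card_range, nsmul_eq_mul]
    _ = k * ∑ j ∈ range m, (j : R) ^ n := by
        rw [← mul_sum, ← sum_mul, mul_comm _ (m : R), hk, mul_zero, add_zero]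

lemma sum_range_mul_pow_modEq (n : ℕ) {q m : ℕ} (hq : Odd q) (hqm : q ∣ m) :
    ∑ i ∈ range (q * m), i ^ n ≡ q * ∑ i ∈ range m, i ^ n [MOD q * m] := by
  rw [← ZMod.natCast_eq_natCast_iff]
  push_cast
  apply sum_range_mul_pow_of_sq_eq_zero
  · rw [← Nat.cast_pow, ZMod.natCast_eq_zero_iff, sq]
    exact mul_dvd_mul_right hqm m
  · rw [← Nat.cast_sum, ← Nat.cast_mul, ZMod.natCast_eq_zero_iff, mul_comm q]
    exact mul_dvd_mul_left m hq.dvd_sum_range_id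

lemma sum_range_pow_modEq_of_odd (n : ℕ) {q : ℕ} (hq : Odd q) (a : ℕ) :
    ∑ i ∈ range (q ^ (a + 1)), i ^ n ≡ q ^ a * ∑ i ∈ range q, i ^ n [MOD q ^ (a + 1)] := by
  induction a with
  | zero => simp [Nat.ModEq.refl]
  | succ a ih =>
    have step := sum_range_mul_pow_modEq n hq (dvd_pow_self q a.succ_ne_zero)
    have ih' := ih.mul_left' q
    rw [← pow_succ'] at step
    rw [← mul_assoc, ← pow_succ' q a, ← pow_succ' q (a + 1)] at ih'
    exact step.trans ih'

theorem FiniteField.sum_pow_of_ne_zero {K : Type*} [Field K] [Fintype K] {n : ℕ} (hn : n ≠ 0) :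
    ∑ x : K, x ^ n = if Fintype.card K - 1 ∣ n then -1 else 0 := by
  classical
  rw [Fintype.sum_eq_add_sum_subtype_ne _ 0, zero_pow hn, zero_add, ← FiniteField.sum_pow_units]
  exact (Fintype.sum_equiv unitsEquivNeZero _ _ fun _ => rfl).symm

lemma ZMod.sum_range_natCast {M : Type*} [AddCommMonoid M] (p : ℕ) [NeZero p] (f : ZMod p → M) :
    ∑ i ∈ range p, f i = ∑ x, f x :=
  sum_nbij' (↑) ZMod.val (by simp) (by simp [ZMod.val_lt])
    (fun i hi => ZMod.val_cast_of_lt (mem_range.1 hi)) (fun x _ => ZMod.natCast_zmod_val x)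
    fun _ _ => rfl

lemma sum_range_pow_modEq_of_prime {p n : ℕ} (hp : p.Prime) (hn : n ≠ 0) :
    ∑ i ∈ range p, i ^ n ≡ if p - 1 ∣ n then p - 1 else 0 [MOD p] := by
  have := Fact.mk hp
  rw [← ZMod.natCast_eq_natCast_iff]
  push_cast
  rw [ZMod.sum_range_natCast p (· ^ n), FiniteField.sum_pow_of_ne_zero hn, ZMod.card]
  split_ifs <;> simp [Nat.cast_sub hp.one_le]

lemma sum_range_pow_modEq_of_prime_pow {p n : ℕ} (hp : p.Prime) (hodd : Odd p) (hn : n ≠ 0)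
    (a : ℕ) :
    ∑ i ∈ range (p ^ (a + 1)), i ^ n ≡
      if p - 1 ∣ n then Nat.totient (p ^ (a + 1)) else 0 [MOD p ^ (a + 1)] := by
  refine (sum_range_pow_modEq_of_odd n hodd a).trans ?_
  rw [Nat.totient_prime_pow_succ hp, pow_succ]
  refine ((sum_range_pow_modEq_of_prime hp hn).mul_left' (p ^ a)).trans ?_
  split_ifs <;> rfl

lemma S_modEq_sum_range {n : ℕ} (hn : n ≠ 0) (m : ℕ) :
    S n m ≡ ∑ i ∈ range m, i ^ n [MOD m] := by
  have hS : S n m = ∑ i ∈ range m, i ^ n + m ^ n := by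
    rw [S, ← sum_range_succ, sum_range_succ', zero_pow hn, add_zero]
    exact sum_Ico_eq_sum_range (· ^ n) 1 (m + 1) |>.trans (by simp [add_comm])
  rw [hS]
  simpa using (Nat.modEq_zero_iff_dvd.2 (dvd_pow_self m hn)).add_left (∑ i ∈ range m, i ^ n)

theorem stmt2 (n q a : ℕ) (hn : 1 ≤ n) (hq : q.Prime) (hodd : Odd q) (ha : 1 ≤ a) :
    ((q - 1 ∣ n) → S n (q ^ a) ≡ Nat.totient (q ^ a) [MOD q ^ a]) ∧
    (¬ (q - 1 ∣ n) → S n (q ^ a) ≡ 0 [MOD q ^ a]) := by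
  have hn0 : n ≠ 0 := Nat.one_le_iff_ne_zero.mp hn
  obtain ⟨a, rfl⟩ : ∃ b, a = b + 1 := ⟨a - 1, by omega⟩
  have h := (S_modEq_sum_range hn0 _).trans (sum_range_pow_modEq_of_prime_pow hq hodd hn0 a)
  constructor <;> intro hd <;> simpa [hd] using h
end

section
/- For any natural numbers a, n ≥ 1 and any prime q, the power sum S_n(q^a) = ∑_{i=1}^{q^a} i^n is divisible by q^(a-1). -/
open Finset

lemma S_eq_sum_range (n m : ℕ) : S n m = ∑ i ∈ range m, (i + 1) ^ n := by
  rw [S, range_eq_Ico, sum_Ico_add' (fun i => i ^ n)]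
  rfl

lemma sum_range_mul_of_periodic {M : Type*} [AddCommMonoid M] {f : ℕ → M} {c : ℕ}
    (hf : Function.Periodic f c) (k : ℕ) :
    ∑ i ∈ range (k * c), f i = k • ∑ i ∈ range c, f i := by
  induction k with
  | zero => simp
  | succ k ih =>
    rw [add_mul, one_mul, sum_range_add, ih, succ_nsmul]
    congr 1
    refine sum_congr rfl fun i _ => ?_
    rw [add_comm]
    exact hf.nat_mul k i

lemma S_mul_modEq (n k M : ℕ) : S n (k * M) ≡ k * S n M [MOD M] := by
  have hf : Function.Periodic (fun i : ℕ => ((i + 1 : ℕ) : ZMod M) ^ n) M := fun i => by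
    simp
  rw [← ZMod.natCast_eq_natCast_iff]
  push_cast [S_eq_sum_range]
  simpa using sum_range_mul_of_periodic hf k

theorem pow_dvd_S_pow_succ (n a q : ℕ) : q ^ a ∣ S n (q ^ (a + 1)) := by
  induction a with
  | zero => simp
  | succ a ih =>
    rw [pow_succ' q (a + 1), (S_mul_modEq n q _).dvd_iff dvd_rfl]
    simpa only [← pow_succ'] using mul_dvd_mul_left q ih

theorem stmt3_general (n a q : ℕ) :
    q ^ (a - 1) ∣ S n (q ^ a) := by
  cases a with
  | zero => simp
  | succ a => exact pow_dvd_S_pow_succ n a q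

theorem stmt3 (n a q : ℕ) (hn : 1 ≤ n) (ha : 1 ≤ a) (hq : q.Prime) :
    q ^ (a - 1) ∣ S n (q ^ a) :=
  stmt3_general n a q
end

section
/- If n, i, j, k are natural numbers with n, i, j, k ≥ 1, q is an odd prime, and q^i divides n, then q^(i+j) divides C(n,k) · (q^j)^k. Moreover, if k ≥ 2, then q^(i+j+1) divides C(n,k) · (q^j)^k. -/
/-! From `k * C(n,k) = n * C(n-1,k-1)` one gets `v_q(C(n,k)) + v_q(k) ≥ i`, so
`v_q(C(n,k) q^{jk}) ≥ i + jk - v_q(k)`. Finally `v_q(k) ≤ k - 1 ≤ j(k - 1)`, and for `q ≥ 3`,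
`k ≥ 2` the sharper `v_q(k) ≤ k - 2` holds, as `k ≥ q^v ≥ 3^v ≥ v + 2` when `v = v_q(k) ≥ 1`. -/

namespace Nat

theorem dvd_choose_mul_of_dvd {d n : ℕ} (k : ℕ) (h : d ∣ n) : d ∣ n.choose k * k := by
  rcases k with _ | k
  · simp
  rcases n with _ | n
  · simp
  rw [← add_one_mul_choose_eq]
  exact h.mul_right _

theorem pow_dvd_choose_mul_ordProj {q i n k : ℕ} (hq : q.Prime) (hk : k ≠ 0)
    (h : q ^ i ∣ n) : q ^ i ∣ n.choose k * ordProj[q] k := by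
  have hdvd : q ^ i ∣ n.choose k * (ordProj[q] k * ordCompl[q] k) := by
    rw [ordProj_mul_ordCompl_eq_self]
    exact dvd_choose_mul_of_dvd k h
  rw [← mul_assoc] at hdvd
  exact (Coprime.pow_left i (coprime_ordCompl hq hk)).dvd_of_dvd_mul_right hdvd

theorem pow_dvd_choose_mul_pow_pow {q i j m n k : ℕ} (hq : q.Prime) (hk : k ≠ 0)
    (h : q ^ i ∣ n) (hm : m + k.factorization q ≤ i + j * k) :
    q ^ m ∣ n.choose k * (q ^ j) ^ k := by
  have hqb : q ^ k.factorization q ≠ 0 := pow_ne_zero _ hq.ne_zero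
  rw [← mul_dvd_mul_iff_right hqb, ← pow_add]
  calc q ^ (m + k.factorization q) ∣ q ^ (i + j * k) := pow_dvd_pow q hm
    _ = q ^ i * (q ^ j) ^ k := by rw [pow_add, pow_mul]
    _ ∣ n.choose k * ordProj[q] k * (q ^ j) ^ k :=
      mul_dvd_mul_right (pow_dvd_choose_mul_ordProj hq hk h) _
    _ = n.choose k * (q ^ j) ^ k * ordProj[q] k := by ring

theorem factorization_add_two_le {q k : ℕ} (hq : 3 ≤ q) (hk : 2 ≤ k) :
    k.factorization q + 2 ≤ k := by
  rcases hb : k.factorization q with _ | c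
  · omega
  have hc : c < 3 ^ c := Nat.lt_pow_self (by norm_num)
  calc c + 1 + 2 ≤ 3 ^ (c + 1) := by rw [pow_succ]; omega
    _ ≤ q ^ (c + 1) := Nat.pow_le_pow_left hq _
    _ ≤ k := hb ▸ le_of_dvd (by omega) (ordProj_dvd k q)

end Nat

theorem stmt4_general (n i j k q : ℕ) (hj : 1 ≤ j) (hk : 1 ≤ k)
    (hq : q.Prime) (hodd : Odd q) (hdvd : q ^ i ∣ n) :
    q ^ (i + j) ∣ Nat.choose n k * (q ^ j) ^ k ∧
    (2 ≤ k → q ^ (i + j + 1) ∣ Nat.choose n k * (q ^ j) ^ k) := by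
  have hk0 : k ≠ 0 := by omega
  have hj_mul : j * k = j * (k - 1) + j := by
    rw [← Nat.mul_add_one, Nat.sub_add_cancel hk]
  have hk_le : k - 1 ≤ j * (k - 1) := Nat.le_mul_of_pos_left _ hj
  refine ⟨Nat.pow_dvd_choose_mul_pow_pow hq hk0 hdvd ?_, fun hk2 ↦
    Nat.pow_dvd_choose_mul_pow_pow hq hk0 hdvd ?_⟩
  · have := Nat.factorization_lt q hk0
    omega
  · have hq3 : 3 ≤ q := by
      obtain ⟨r, rfl⟩ := hodd
      have := hq.two_le
      omega
    have := Nat.factorization_add_two_le hq3 hk2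
    omega

theorem stmt4 (n i j k q : ℕ) (hn : 1 ≤ n) (hi : 1 ≤ i) (hj : 1 ≤ j) (hk : 1 ≤ k)
    (hq : q.Prime) (hodd : Odd q) (hdvd : q ^ i ∣ n) :
    q ^ (i + j) ∣ Nat.choose n k * (q ^ j) ^ k ∧
    (2 ≤ k → q ^ (i + j + 1) ∣ Nat.choose n k * (q ^ j) ^ k) :=
  stmt4_general n i j k q hj hk hq hodd hdvd
end

section
/- If i, j, n, t are natural numbers with i, j, n, t ≥ 1, q is an odd prime, and q^i divides n, then (t + q^j)^n ≡ t^n (mod q^(i+j)). -/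
lemma key_step (p : ℕ) (hp : p.Prime) (k : ℕ) (hk : 1 ≤ k) (a b : ℤ)
    (h : a ≡ b [ZMOD (p : ℤ) ^ k]) : a ^ p ≡ b ^ p [ZMOD (p : ℤ) ^ (k + 1)] := by
  have hdvd2 : (p : ℤ) ^ k ∣ b - a := Int.ModEq.dvd h
  have hpk : (p : ℤ) ∣ b - a :=
    dvd_trans (dvd_pow_self (p : ℤ) (Nat.one_le_iff_ne_zero.mp hk)) hdvd2
  have hab : a ≡ b [ZMOD (p : ℤ)] := Int.modEq_iff_dvd.mpr hpk
  have hsum : (p : ℤ) ∣ ∑ l ∈ Finset.range p, a ^ l * b ^ (p - 1 - l) := by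
    have h1 : (∑ l ∈ Finset.range p, a ^ l * b ^ (p - 1 - l)) ≡
        (∑ l ∈ Finset.range p, b ^ l * b ^ (p - 1 - l)) [ZMOD (p : ℤ)] := by
      rw [Int.modEq_iff_dvd, ← Finset.sum_sub_distrib]
      refine Finset.dvd_sum fun l _ => ?_
      have : b ^ l * b ^ (p - 1 - l) - a ^ l * b ^ (p - 1 - l)
          = (b ^ l - a ^ l) * b ^ (p - 1 - l) := by ring
      rw [this]
      exact dvd_mul_of_dvd_left (dvd_trans hpk (sub_dvd_pow_sub_pow b a l)) _
    have heq : ∀ l ∈ Finset.range p, b ^ l * b ^ (p - 1 - l) = b ^ (p - 1) := by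
      intro l hl
      rw [← pow_add]
      congr 1
      have := Finset.mem_range.mp hl
      omega
    have h2 : (∑ l ∈ Finset.range p, b ^ l * b ^ (p - 1 - l)) ≡ 0 [ZMOD (p : ℤ)] := by
      rw [Finset.sum_congr rfl heq, Finset.sum_const, Finset.card_range, nsmul_eq_mul]
      exact (Int.modEq_zero_iff_dvd).mpr ⟨b ^ (p - 1), rfl⟩
    exact (Int.modEq_zero_iff_dvd).mp (h1.trans h2)
  have hfact : a ^ p - b ^ p =
      (∑ l ∈ Finset.range p, a ^ l * b ^ (p - 1 - l)) * (a - b) := by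
    rw [geom_sum₂_mul]
  have hd : (p : ℤ) ^ (k + 1) ∣ b ^ p - a ^ p := by
    have : (p : ℤ) ^ (k + 1) ∣ a ^ p - b ^ p := by
      rw [hfact, pow_succ, mul_comm ((p : ℤ) ^ k)]
      exact mul_dvd_mul hsum (by simpa [neg_sub] using hdvd2.neg_right)
    simpa [neg_sub] using this.neg_right
  exact Int.modEq_iff_dvd.mpr hd

lemma key_iter (p : ℕ) (hp : p.Prime) (j : ℕ) (hj : 1 ≤ j) (a b : ℤ)
    (h : a ≡ b [ZMOD (p : ℤ) ^ j]) (i : ℕ) :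
    a ^ p ^ i ≡ b ^ p ^ i [ZMOD (p : ℤ) ^ (i + j)] := by
  induction i with
  | zero => simpa using h
  | succ i ih =>
      have := key_step p hp (i + j) (by omega) _ _ ih
      rw [← pow_mul, ← pow_mul, ← pow_succ] at this
      have hij : i + j + 1 = i + 1 + j := by omega
      rwa [hij] at this

theorem stmt5 (i j n t q : ℕ) (hi : 1 ≤ i) (hj : 1 ≤ j) (hn : 1 ≤ n) (ht : 1 ≤ t)
    (hq : q.Prime) (hodd : Odd q) (hdvd : q ^ i ∣ n) :
    (t + q ^ j) ^ n ≡ t ^ n [MOD q ^ (i + j)] := by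
  obtain ⟨m, rfl⟩ := hdvd
  rw [← Int.natCast_modEq_iff]
  push_cast
  have hbase : ((t : ℤ) + (q : ℤ) ^ j) ≡ (t : ℤ) [ZMOD (q : ℤ) ^ j] :=
    Int.modEq_iff_dvd.mpr ⟨-1, by ring⟩
  have := key_iter q hq j hj _ _ hbase i
  rw [pow_mul, pow_mul]
  exact this.pow m
end

section
/- If i ≥ 0 and j, n ≥ 1 are integers, q is an odd prime, (q-1) does not divide n, and q^i divides n, then S_n(q^j) = ∑_{k=1}^{q^j} k^n ≡ 0 (mod q^(i+j)). -/
/-!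
Work in `ZMod (q ^ (i + j))`. Since `q ^ i ∣ n`, lifting the exponent shows that `x ^ n` there
depends only on `x` modulo `q ^ j`, so `f x = x.val ^ n` is a multiplicative function on
`ZMod (q ^ j)` and `S n (q ^ j) = ∑ x, f x` (the top term `(q ^ j) ^ n` vanishes).
As `(ZMod q)ˣ` is cyclic of order `q - 1 ∤ n`, some unit `c` has `c ^ n ≢ 1 (mod q)`,
so `f c - 1` is a unit; multiplication by `c` permutes `ZMod (q ^ j)`, whence
`(f c - 1) * ∑ x, f x = 0`.
-/

open Finset

theorem pow_succ_dvd_pow_sub_pow {R : Type*} [CommRing R] {p s : ℕ} {a b : R} (hs : s ≠ 0)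
    (h : (p : R) ^ s ∣ a - b) : (p : R) ^ (s + 1) ∣ a ^ p - b ^ p := by
  rw [← geom_sum₂_mul, pow_succ']
  exact mul_dvd_mul (dvd_geom_sum₂_self ((dvd_pow_self _ hs).trans h)) h

theorem pow_add_dvd_pow_sub_pow {R : Type*} [CommRing R] {p s i n : ℕ} {a b : R} (hs : s ≠ 0)
    (hn : p ^ i ∣ n) (h : (p : R) ^ s ∣ a - b) : (p : R) ^ (i + s) ∣ a ^ n - b ^ n := by
  obtain ⟨m, rfl⟩ := hn
  refine (?_ : (p : R) ^ (i + s) ∣ a ^ p ^ i - b ^ p ^ i).trans ?_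
  · induction i with
    | zero => simpa using h
    | succ i ih =>
      rw [add_right_comm, pow_succ p i, pow_mul, pow_mul]
      exact pow_succ_dvd_pow_sub_pow (by omega) ih
  · simpa only [pow_mul] using sub_dvd_pow_sub_pow _ _ m

theorem Nat.ModEq.pow_of_pow_dvd {p s i n a b : ℕ} (hs : s ≠ 0) (hn : p ^ i ∣ n)
    (h : a ≡ b [MOD p ^ s]) : a ^ n ≡ b ^ n [MOD p ^ (i + s)] := by
  rw [Nat.modEq_iff_dvd] at h ⊢
  push_cast at h ⊢
  exact pow_add_dvd_pow_sub_pow hs hn h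

theorem Fintype.sum_eq_zero_of_map_unit_mul {M R : Type*} [Monoid M] [Fintype M] [CommRing R]
    (f : M → R) (c : Mˣ) (hf : ∀ x, f (c * x) = f c * f x) (hc : IsUnit (f c - 1)) :
    ∑ x, f x = 0 := by
  have hinv : ∑ x, f (c * x) = ∑ x, f x := Fintype.sum_equiv c.mulLeft _ _ fun _ => rfl
  simp only [hf, ← mul_sum] at hinv
  exact hc.mul_right_eq_zero.mp (by rw [sub_mul, one_mul, hinv, sub_self])

theorem ZMod.exists_units_pow_ne_one {q n : ℕ} [Fact q.Prime] (hn : ¬ q - 1 ∣ n) :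
    ∃ g : (ZMod q)ˣ, g ^ n ≠ 1 := by
  by_contra! h
  apply hn
  rw [← ZMod.card_units q, ← Nat.card_eq_fintype_card, ← IsCyclic.exponent_eq_card]
  exact Monoid.exponent_dvd_of_forall_pow_eq_one h

theorem ZMod.isUnit_of_castHom_ne_zero {p k : ℕ} (hp : p.Prime) (hk : k ≠ 0) (y : ZMod (p ^ k))
    (hy : ZMod.castHom (dvd_pow_self p hk) (ZMod p) y ≠ 0) : IsUnit y := by
  have : NeZero p := ⟨hp.ne_zero⟩
  rw [← ZMod.natCast_zmod_val y, ZMod.isUnit_natCast_iff_not_dvd_pow hp (Nat.pos_of_ne_zero hk)]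
  rwa [← ZMod.natCast_zmod_val y, map_natCast, Ne, ZMod.natCast_eq_zero_iff] at hy

theorem Finset.sum_Icc_one_eq_sum_range_add {M : Type*} [AddCommMonoid M] {f : ℕ → M}
    (hf : f 0 = 0) (m : ℕ) : ∑ k ∈ Icc 1 m, f k = ∑ k ∈ range m, f k + f m := by
  rw [← sum_range_succ, Nat.range_succ_eq_Icc_zero, Icc_eq_cons_Ioc (Nat.zero_le m), sum_cons,
    hf, zero_add, ← Icc_add_one_left_eq_Ioc, zero_add]

theorem ZMod.sum_comp_val {m : ℕ} [NeZero m] {M : Type*} [AddCommMonoid M] (f : ℕ → M) :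
    ∑ x : ZMod m, f x.val = ∑ k ∈ range m, f k :=
  sum_nbij (·.val) (fun x _ => mem_range.2 (ZMod.val_lt x))
    (fun _ _ _ _ h => ZMod.val_injective m h)
    (fun k hk => ⟨k, mem_univ _, ZMod.val_cast_of_lt (mem_range.1 hk)⟩) fun _ _ => rfl

theorem ZMod.natCast_val_mul_pow {p s i n : ℕ} (hs : s ≠ 0) (hn : p ^ i ∣ n)
    (x y : ZMod (p ^ s)) :
    ((x * y).val : ZMod (p ^ (i + s))) ^ n = (x.val : ZMod (p ^ (i + s))) ^ n * y.val ^ n := by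
  have h := (ZMod.val_mul x y ▸ Nat.mod_modEq (x.val * y.val) (p ^ s)).pow_of_pow_dvd hs hn
  rw [← mul_pow]
  exact_mod_cast (ZMod.natCast_eq_natCast_iff _ _ _).2 h

theorem ZMod.exists_units_isUnit_val_pow_sub_one {q j k n : ℕ} (hq : q.Prime) (hj : j ≠ 0)
    (hk : k ≠ 0) (hn : ¬ q - 1 ∣ n) :
    ∃ c : (ZMod (q ^ j))ˣ, IsUnit (((c : ZMod (q ^ j)).val : ZMod (q ^ k)) ^ n - 1) := by
  have : Fact q.Prime := ⟨hq⟩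
  obtain ⟨g, hg⟩ := ZMod.exists_units_pow_ne_one hn
  obtain ⟨c, rfl⟩ := ZMod.unitsMap_surjective (dvd_pow_self q hj) g
  refine ⟨c, ZMod.isUnit_of_castHom_ne_zero hq hk _ ?_⟩
  rwa [map_sub, map_pow, map_natCast, map_one, sub_ne_zero, ← ZMod.cast_eq_val,
    ← ZMod.unitsMap_val (dvd_pow_self q hj), ← Units.val_pow_eq_pow_val, Ne, Units.val_eq_one]

theorem stmt6_general (i j n q : ℕ) (hj : 1 ≤ j) (hn : 1 ≤ n) (hq : q.Prime)
    (hnd : ¬ (q - 1 ∣ n)) (hdvd : q ^ i ∣ n) :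
    S n (q ^ j) ≡ 0 [MOD q ^ (i + j)] := by
  have : NeZero q := ⟨hq.ne_zero⟩
  have hj0 : j ≠ 0 := by omega
  obtain ⟨c, hc⟩ := ZMod.exists_units_isUnit_val_pow_sub_one (k := i + j) hq hj0 (by omega) hnd
  have hsum : ∑ x : ZMod (q ^ j), (x.val : ZMod (q ^ (i + j))) ^ n = 0 :=
    Fintype.sum_eq_zero_of_map_unit_mul _ c (ZMod.natCast_val_mul_pow hj0 hdvd c) hc
  have htop : q ^ (i + j) ∣ (q ^ j) ^ n := by
    have : i < n := (Nat.lt_pow_self hq.one_lt).trans_le (Nat.le_of_dvd hn hdvd)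
    rw [← pow_mul]
    exact pow_dvd_pow q (by nlinarith)
  rw [Nat.modEq_zero_iff_dvd, ← ZMod.natCast_eq_zero_iff, S,
    sum_Icc_one_eq_sum_range_add (zero_pow (by omega)), Nat.cast_add,
    (ZMod.natCast_eq_zero_iff _ _).2 htop, add_zero, Nat.cast_sum, ← ZMod.sum_comp_val]
  simpa using hsum

theorem stmt6 (i j n q : ℕ) (hj : 1 ≤ j) (hn : 1 ≤ n) (hq : q.Prime) (hodd : Odd q)
    (hnd : ¬ (q - 1 ∣ n)) (hdvd : q ^ i ∣ n) :
    S n (q ^ j) ≡ 0 [MOD q ^ (i + j)] :=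
  stmt6_general i j n q hj hn hq hnd hdvd
end

section
/- For any prime q and any natural numbers n, m, a ≥ 1, S_n(m + q^(a+1)) ≡ S_n(m) (mod q^a). -/
/-!
`S n (m + q ^ (a + 1)) - S n m` is a sum of `i ^ n` over `q ^ (a + 1)` consecutive integers.
Modulo `q ^ a` the summand has period `q ^ a`, so this sum is `q` times a sum over `q ^ a`
consecutive integers; hence `q ^ a` divides it, by induction on `a`.
-/

open Finset

theorem Function.Periodic.sum_range_mul {M : Type*} [AddCommMonoid M] {f : ℕ → M} {N : ℕ}
    (hf : Function.Periodic f N) (t : ℕ) :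
    ∑ j ∈ range (t * N), f j = t • ∑ j ∈ range N, f j := by
  induction t with
  | zero => simp
  | succ t ih =>
    rw [Nat.succ_mul, sum_range_add, ih, succ_nsmul]
    congr 1
    exact sum_congr rfl fun j _ => by simpa [add_comm] using hf.nat_mul t j

theorem pow_dvd_sum_range_pow_add (q n a c : ℕ) :
    q ^ a ∣ ∑ j ∈ range (q ^ (a + 1)), (c + j) ^ n := by
  induction a with
  | zero => exact one_dvd _
  | succ a ih =>
    obtain ⟨s, hs⟩ := ih
    have hperiodic : Function.Periodic (fun j : ℕ => (((c + j) ^ n : ℕ) : ZMod (q ^ (a + 1))))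
        (q ^ (a + 1)) := fun j => by
      dsimp only
      rw [← add_assoc, Nat.cast_pow, Nat.cast_pow, Nat.cast_add (c + j), ZMod.natCast_self,
        add_zero]
    rw [← ZMod.natCast_eq_zero_iff, Nat.cast_sum]
    calc ∑ j ∈ range (q ^ (a + 1 + 1)), (((c + j) ^ n : ℕ) : ZMod (q ^ (a + 1)))
        = q • ((q ^ a * s : ℕ) : ZMod (q ^ (a + 1))) := by
          rw [pow_succ' q (a + 1), hperiodic.sum_range_mul, ← hs, Nat.cast_sum]
      _ = ((q ^ (a + 1) * s : ℕ) : ZMod (q ^ (a + 1))) := by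
          rw [nsmul_eq_mul, ← Nat.cast_mul, pow_succ', mul_assoc]
      _ = 0 := (ZMod.natCast_eq_zero_iff _ _).mpr (dvd_mul_right _ _)

theorem S_add (n m k : ℕ) : S n (m + k) = S n m + ∑ j ∈ range k, (m + 1 + j) ^ n := by
  simp only [S, ← Ico_add_one_right_eq_Icc]
  rw [← sum_Ico_consecutive _ (Nat.le_add_left 1 m) (by omega : m + 1 ≤ m + k + 1),
    sum_Ico_eq_sum_range _ (m + 1), show m + k + 1 - (m + 1) = k by omega]

theorem stmt7_general (q n m a : ℕ) :
    S n (m + q ^ (a + 1)) ≡ S n m [MOD q ^ a] := by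
  rw [S_add]
  have hdvd := pow_dvd_sum_range_pow_add q n a (m + 1)
  simpa using (Nat.modEq_zero_iff_dvd.mpr hdvd).add_left (S n m)

theorem stmt7 (q n m a : ℕ) (hq : q.Prime) (hn : 1 ≤ n) (hm : 1 ≤ m) (ha : 1 ≤ a) :
    S n (m + q ^ (a + 1)) ≡ S n m [MOD q ^ a] :=
  stmt7_general q n m a
end

section
/- If n, i, j are natural numbers with n ≥ 1, i ≥ 1, j ≥ 1, q is an odd prime, q^i divides n, and m ≥ 1, then S_n(m + q^j) ≡ S_n(q^j) + S_n(m) (mod q^(i+j)). -/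
section PowSubPow

variable {R : Type*} [CommRing R] {q j : ℕ} {x y : R}

theorem pow_succ_dvd_pow_sub_pow_of_pow_dvd_sub (hj : j ≠ 0) (h : (q : R) ^ j ∣ x - y) :
    (q : R) ^ (j + 1) ∣ x ^ q - y ^ q := by
  rw [pow_succ', ← geom_sum₂_mul]
  exact mul_dvd_mul (dvd_geom_sum₂_self ((dvd_pow_self _ hj).trans h)) h

theorem pow_add_dvd_pow_pow_sub_pow_pow_of_pow_dvd_sub (hj : j ≠ 0) (h : (q : R) ^ j ∣ x - y)
    (i : ℕ) : (q : R) ^ (j + i) ∣ x ^ q ^ i - y ^ q ^ i := by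
  induction i with
  | zero => simpa using h
  | succ i ih =>
    rw [← add_assoc, pow_succ q i, pow_mul, pow_mul]
    exact pow_succ_dvd_pow_sub_pow_of_pow_dvd_sub (by omega) ih

theorem pow_add_dvd_pow_sub_pow_of_pow_dvd_sub {i n : ℕ} (hj : j ≠ 0) (h : (q : R) ^ j ∣ x - y)
    (hn : q ^ i ∣ n) : (q : R) ^ (i + j) ∣ x ^ n - y ^ n := by
  obtain ⟨k, rfl⟩ := hn
  rw [add_comm, pow_mul, pow_mul]
  exact (pow_add_dvd_pow_pow_sub_pow_pow_of_pow_dvd_sub hj h i).trans (sub_dvd_pow_sub_pow _ _ k)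

end PowSubPow

theorem add_pow_pow_modEq_pow {q i j n : ℕ} (hj : j ≠ 0) (hn : q ^ i ∣ n) (a : ℕ) :
    (a + q ^ j) ^ n ≡ a ^ n [MOD q ^ (i + j)] := by
  rw [Nat.ModEq.comm, Nat.modEq_iff_dvd]
  push_cast
  exact pow_add_dvd_pow_sub_pow_of_pow_dvd_sub hj (by simp) hn

theorem S_succ (n m : ℕ) : S n (m + 1) = S n m + (m + 1) ^ n :=
  Finset.sum_Icc_succ_top (by omega) _

theorem S_add_modEq {n c d : ℕ} (h : ∀ a, (a + c) ^ n ≡ a ^ n [MOD d]) (m : ℕ) :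
    S n (m + c) ≡ S n c + S n m [MOD d] := by
  induction m with
  | zero => simpa [S] using Nat.ModEq.refl _
  | succ m ih =>
    rw [add_right_comm, S_succ, S_succ, ← add_assoc, add_right_comm m c 1]
    exact ih.add (h (m + 1))

theorem stmt16_general (n i j m q : ℕ) (hj : 1 ≤ j) (hdvd : q ^ i ∣ n) :
    S n (m + q ^ j) ≡ S n (q ^ j) + S n m [MOD q ^ (i + j)] :=
  S_add_modEq (add_pow_pow_modEq_pow (by omega) hdvd) m

theorem stmt16 (n i j m q : ℕ) (hn : 1 ≤ n) (hi : 1 ≤ i) (hj : 1 ≤ j) (hm : 1 ≤ m)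
    (hq : q.Prime) (hodd : Odd q) (hdvd : q ^ i ∣ n) :
    S n (m + q ^ j) ≡ S n (q ^ j) + S n m [MOD q ^ (i + j)] :=
  stmt16_general n i j m q hj hdvd
end

section
/- Let q be an odd prime, n ≥ 1 with (q-1) ∤ n, i ≥ 1 with q^i | n, and let g be a primitive root modulo q. Then (g^n - 1) · S_n(q) ≡ 0 (mod q^(i+1)), and since g^n ≢ 1 (mod q), it follows that S_n(q) ≡ 0 (mod q^(i+1)). -/
open Finset

theorem pow_dvd_pow_sub_pow_of_dvd_sub {R : Type*} [CommRing R] {p i n : ℕ} {a b : R}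
    (hab : (p : R) ∣ a - b) (hn : p ^ i ∣ n) : (p : R) ^ (i + 1) ∣ a ^ n - b ^ n := by
  obtain ⟨m, rfl⟩ := hn
  rw [pow_mul, pow_mul]
  exact (dvd_sub_pow_of_dvd_sub hab i).trans (sub_dvd_pow_sub_pow _ _ m)

theorem ZMod.sum_Icc_one_natCast_eq_sum {M : Type*} [AddCommMonoid M] {q : ℕ} [NeZero q]
    (F : ZMod q → M) : ∑ j ∈ Icc 1 q, F j = ∑ x, F x := by
  refine sum_nbij' (fun j => j) (fun x => (x - 1).val + 1) (by simp) ?_ ?_ (by simp) (by simp)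
  · intro x _
    simpa [Nat.succ_le_iff] using (x - 1).val_lt
  · intro j hj
    rw [mem_Icc] at hj
    obtain ⟨k, rfl⟩ : ∃ k, j = k + 1 := ⟨j - 1, by omega⟩
    simp [ZMod.val_cast_of_lt (by omega : k < q)]

/-- By `liftedPow_natCast`, the choice of representative `x.val` is immaterial when `p ^ i ∣ n`. -/
def liftedPow (p i n : ℕ) (x : ZMod p) : ZMod (p ^ (i + 1)) :=
  (x.val : ZMod (p ^ (i + 1))) ^ n

section liftedPow

variable {p i n : ℕ}

theorem liftedPow_natCast (hn : p ^ i ∣ n) (a : ℕ) :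
    liftedPow p i n a = (a : ZMod (p ^ (i + 1))) ^ n := by
  have hmod := map_dvd (Int.castRingHom (ZMod (p ^ (i + 1))))
    (Nat.modEq_iff_dvd.mp (Nat.mod_modEq a p).symm)
  simp only [map_sub, map_natCast] at hmod
  have h := pow_dvd_pow_sub_pow_of_dvd_sub hmod hn
  rw [← Nat.cast_pow, ZMod.natCast_self, zero_dvd_iff, sub_eq_zero] at h
  simpa [liftedPow, ZMod.val_natCast] using h

theorem liftedPow_natCast_mul [NeZero p] (hn : p ^ i ∣ n) (g : ℕ) (x : ZMod p) :
    liftedPow p i n (g * x) = (g : ZMod (p ^ (i + 1))) ^ n * liftedPow p i n x := by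
  have hgx : (g : ZMod p) * x = ((g * x.val : ℕ) : ZMod p) := by simp
  rw [hgx, liftedPow_natCast hn, Nat.cast_mul, mul_pow, liftedPow]

theorem natCast_S_eq_sum_liftedPow [NeZero p] (hn : p ^ i ∣ n) :
    (S n p : ZMod (p ^ (i + 1))) = ∑ x, liftedPow p i n x := by
  simp only [S, Nat.cast_sum, Nat.cast_pow, ← liftedPow_natCast hn]
  exact ZMod.sum_Icc_one_natCast_eq_sum _

theorem pow_mul_sum_liftedPow [NeZero p] (hn : p ^ i ∣ n) {g : ℕ} (hg : IsUnit (g : ZMod p)) :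
    (g : ZMod (p ^ (i + 1))) ^ n * ∑ x, liftedPow p i n x = ∑ x, liftedPow p i n x := by
  rw [mul_sum]
  simp only [← liftedPow_natCast_mul hn]
  exact Equiv.sum_comp (Units.mulLeft hg.unit) (liftedPow p i n)

theorem pow_sub_one_mul_S_eq_zero [NeZero p] (hn : p ^ i ∣ n) {g : ℕ}
    (hg : IsUnit (g : ZMod p)) :
    ((g : ZMod (p ^ (i + 1))) ^ n - 1) * (S n p : ZMod (p ^ (i + 1))) = 0 := by
  rw [sub_mul, one_mul, natCast_S_eq_sum_liftedPow hn, pow_mul_sum_liftedPow hn hg, sub_self]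

end liftedPow

theorem stmt17_general (q n i g : ℕ) (hq : q.Prime)
    (hnd : ¬ (q - 1 ∣ n)) (hdvd : q ^ i ∣ n)
    (hg : IsPrimitiveRoot (g : ZMod q) (q - 1)) :
    ((g : ℤ) ^ n - 1) * (S n q : ℤ) ≡ 0 [ZMOD ((q : ℤ) ^ (i + 1))] ∧
    ¬ ((g : ℤ) ^ n ≡ 1 [ZMOD (q : ℤ)]) ∧
    S n q ≡ 0 [MOD q ^ (i + 1)] := by
  have : NeZero q := ⟨hq.ne_zero⟩
  have hmul : ((g : ℤ) ^ n - 1) * (S n q : ℤ) ≡ 0 [ZMOD ((q : ℤ) ^ (i + 1))] := by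
    rw [← Nat.cast_pow, ← ZMod.intCast_eq_intCast_iff]
    push_cast
    exact pow_sub_one_mul_S_eq_zero hdvd (hg.isUnit (by have := hq.two_le; omega))
  have hne : ¬ ((g : ℤ) ^ n ≡ 1 [ZMOD (q : ℤ)]) := by
    rw [← ZMod.intCast_eq_intCast_iff]
    push_cast
    exact fun h => hnd ((hg.pow_eq_one_iff_dvd n).mp h)
  have hndvd : ¬ (q : ℤ) ∣ (g : ℤ) ^ n - 1 := fun h => hne (Int.modEq_iff_dvd.mpr h).symm
  refine ⟨hmul, hne, ?_⟩
  rw [Nat.modEq_zero_iff_dvd, ← Int.natCast_dvd_natCast]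
  push_cast
  exact (Nat.prime_iff_prime_int.mp hq).pow_dvd_of_dvd_mul_left _ hndvd
    (Int.modEq_zero_iff_dvd.mp hmul)

theorem stmt17 (q n i g : ℕ) (hq : q.Prime) (hodd : Odd q) (hn : 1 ≤ n)
    (hnd : ¬ (q - 1 ∣ n)) (hi : 1 ≤ i) (hdvd : q ^ i ∣ n)
    (hg : IsPrimitiveRoot (g : ZMod q) (q - 1)) :
    ((g : ℤ) ^ n - 1) * (S n q : ℤ) ≡ 0 [ZMOD ((q : ℤ) ^ (i + 1))] ∧
    ¬ ((g : ℤ) ^ n ≡ 1 [ZMOD (q : ℤ)]) ∧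
    S n q ≡ 0 [MOD q ^ (i + 1)] :=
  stmt17_general q n i g hq hnd hdvd hg
end

section
/- Let k = q_1^(a_1) · q_2^(a_2) · ... · q_r^(a_r) be the prime factorization of k with distinct primes q_i and a_i ≥ 1. Then for all n ≥ 1 and m ≥ 1, S_n(m + q_1^(a_1+1)·q_2^(a_2+1)···q_r^(a_r+1)) ≡ S_n(m) (mod k). -/
/-!
Modulo `N`, `i ↦ i ^ n` has every period `P` divisible by `N`, so its sum over an interval of
length `P * t` is `t` times its sum over `[0, P)`. With `N = P = q ^ (b + 1)` and `t = q` this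
gives, by induction on `b`, `q ^ b ∣ ∑_{i < q ^ (b + 1)} i ^ n`; hence `q ^ b` divides the sum
over any interval whose length is a multiple of `q ^ (b + 1)`. For every prime power `q ^ b ∣ k`,
`q ^ (b + 1)` divides `T = ∏ q_i ^ (a_i + 1)`, so `k` divides `S n (m + T) - S n m`.
-/

open Finset Function

namespace Function.Periodic

variable {M : Type*} [AddCommMonoid M] {f : ℕ → M} {P : ℕ}

theorem sum_Ico_add_eq_sum_range (hf : Periodic f P) (c : ℕ) :
    ∑ i ∈ Ico c (c + P), f i = ∑ i ∈ range P, f i := by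
  rw [← Nat.image_Ico_mod c P, sum_image (Nat.mod_injOn_Ico c P)]
  exact sum_congr rfl fun i _ => (hf.map_mod_nat i).symm

theorem sum_Ico_add_mul_eq_nsmul (hf : Periodic f P) (c t : ℕ) :
    ∑ i ∈ Ico c (c + P * t), f i = t • ∑ i ∈ range P, f i := by
  induction t with
  | zero => simp
  | succ t ih =>
    rw [mul_add_one, ← add_assoc, ← sum_Ico_consecutive f (Nat.le_add_right c _)
      (Nat.le_add_right _ P), ih, hf.sum_Ico_add_eq_sum_range, succ_nsmul]

end Function.Periodic

theorem periodic_natCast_zmod_pow {N P : ℕ} (h : N ∣ P) (n : ℕ) :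
    Periodic (fun i : ℕ => (i : ZMod N) ^ n) P := fun i => by
  simp [(ZMod.natCast_eq_zero_iff P N).2 h]

theorem natCast_zmod_sum_Ico_pow {N P : ℕ} (h : N ∣ P) (n c t : ℕ) :
    ((∑ i ∈ Ico c (c + P * t), i ^ n : ℕ) : ZMod N) =
      t * ((∑ i ∈ range P, i ^ n : ℕ) : ZMod N) := by
  push_cast
  rw [(periodic_natCast_zmod_pow h n).sum_Ico_add_mul_eq_nsmul, nsmul_eq_mul]

theorem pow_dvd_sum_range_pow_succ (q n b : ℕ) : q ^ b ∣ ∑ i ∈ range (q ^ (b + 1)), i ^ n := by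
  induction b with
  | zero => simp
  | succ b ih =>
    have h := natCast_zmod_sum_Ico_pow (dvd_refl (q ^ (b + 1))) n 0 q
    rw [zero_add, Nat.Ico_zero_eq_range, ← pow_succ] at h
    rw [← ZMod.natCast_eq_zero_iff, h, ← Nat.cast_mul, ZMod.natCast_eq_zero_iff]
    simpa only [← pow_succ'] using mul_dvd_mul_left q ih

theorem pow_dvd_sum_Ico_pow {q b L : ℕ} (h : q ^ (b + 1) ∣ L) (n c : ℕ) :
    q ^ b ∣ ∑ i ∈ Ico c (c + L), i ^ n := by
  obtain ⟨t, rfl⟩ := h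
  rw [← ZMod.natCast_eq_zero_iff, natCast_zmod_sum_Ico_pow (pow_dvd_pow q b.le_succ),
    (ZMod.natCast_eq_zero_iff _ _).2 (pow_dvd_sum_range_pow_succ q n b), mul_zero]

theorem S_add_eq_add_sum_Ico (n m L : ℕ) : S n (m + L) = S n m + ∑ i ∈ Ico (m + 1) (m + 1 + L), i ^ n := by
  simp only [S, ← Ico_add_one_right_eq_Icc]
  rw [show m + L + 1 = m + 1 + L by omega, sum_Ico_consecutive _ (by omega) (by omega)]

theorem stmt19_general (k : ℕ) (hk : 2 ≤ k) (n m : ℕ) :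
    S n (m + ∏ p ∈ k.factorization.support, p ^ (k.factorization p + 1)) ≡
      S n m [MOD k] := by
  set T := ∏ p ∈ k.factorization.support, p ^ (k.factorization p + 1)
  have hkT : k ∣ ∑ i ∈ Ico (m + 1) (m + 1 + T), i ^ n := by
    refine (Nat.dvd_iff_prime_pow_dvd_dvd _ k).2 fun p j hp hpj => ?_
    rcases j.eq_zero_or_pos with rfl | hj
    · exact one_dvd _
    have hjk : j ≤ k.factorization p := (hp.pow_dvd_iff_le_factorization (by omega)).1 hpj
    have hpk : p ∈ k.factorization.support := Finsupp.mem_support_iff.2 (by omega)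
    have hpT : p ^ (j + 1) ∣ T := (pow_dvd_pow p (Nat.succ_le_succ hjk)).trans
      (dvd_prod_of_mem (fun p => p ^ (k.factorization p + 1)) hpk)
    exact pow_dvd_sum_Ico_pow hpT n (m + 1)
  rw [S_add_eq_add_sum_Ico]
  simpa using (Nat.modEq_zero_iff_dvd.2 hkT).add_left (S n m)

theorem stmt19 (k : ℕ) (hk : 2 ≤ k) (n m : ℕ) (hn : 1 ≤ n) (hm : 1 ≤ m) :
    S n (m + ∏ p ∈ k.factorization.support, p ^ (k.factorization p + 1)) ≡
      S n m [MOD k] :=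
  stmt19_general k hk n m
end
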